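/- (Optimistic first-order general formula.) For any general source X and any ε, δ ∈ [0,1) satisfying ε + δ < 1, it holds that R*(ε,δ|X) = G*_{ε,δ}(X). -/

import Mathlib

open Filter MeasureTheory

namespace NY

/-- A probability distribution on a set, given by its point mass function. -/
structure Dist (α : Type*) where
  p : α → ℝ
  nonneg : ∀ x, 0 ≤ p x
  hasSum : HasSum p 1

/-- The probability of a set under a distribution. -/
noncomputable def Dist.pr {α : Type*} (P : Dist α) (A : Set α) : ℝ := ∑' x : A, P.p x.1

/-- 𝒰* : nonempty finite strings over the code alphabet 𝒰 = {1,…,K}. -/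
abbrev Word (K : ℕ) := {u : List (Fin K) // u ≠ []}

/-- Length of a string, as a real number. -/
noncomputable def wlen {K : ℕ} (u : Word K) : ℝ := u.1.length

/-- Error probability of a variable-length code (φ, ψ). -/
noncomputable def errP {α : Type*} {K : ℕ} (P : Dist α) (φ : α → Word K) (ψ : Word K → α) : ℝ :=
  P.pr {x | ψ (φ x) ≠ x}

/-- Overflow probability of an encoder φ with threshold η. -/
noncomputable def ovP {α : Type*} {K : ℕ} (P : Dist α) (φ : α → Word K) (η : ℝ) : ℝ :=
  P.pr {x | wlen (φ x) > η}

/-- A general source: for each blocklength n, a distribution on 𝒳^n. -/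
abbrev Source (𝒳 : Type*) := (n : ℕ) → Dist (Fin n → 𝒳)

/-- The limit as ν ↓ 0 of a function g which is nonincreasing in ν
(the limit exists by monotonicity and equals the supremum over ν > 0). -/
noncomputable def limNu (g : ℝ → ℝ) : ℝ := sSup (g '' Set.Ioi (0 : ℝ))

variable {𝒳 : Type*}

/-- A rate R ≥ 0 is (ε,δ)-achievable. -/
def FirstAch (K : ℕ) (X : Source 𝒳) (ε δ R : ℝ) : Prop :=
  0 ≤ R ∧ ∃ (φ : ∀ n, (Fin n → 𝒳) → Word K) (ψ : ∀ n, Word K → (Fin n → 𝒳)),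
    limsup (fun n => errP (X n) (φ n) (ψ n)) atTop ≤ ε ∧
    limsup (fun n => ovP (X n) (φ n) ((n : ℝ) * R)) atTop ≤ δ

/-- The first-order (ε,δ)-optimum threshold R(ε,δ|X). -/
noncomputable def Ropt (K : ℕ) (X : Source 𝒳) (ε δ : ℝ) : ℝ :=
  sInf {R | FirstAch K X ε δ R}

/-- L is (ε,δ,R)-achievable (second order). -/
def SecondAch (K : ℕ) (X : Source 𝒳) (ε δ R L : ℝ) : Prop :=
  ∃ (φ : ∀ n, (Fin n → 𝒳) → Word K) (ψ : ∀ n, Word K → (Fin n → 𝒳)),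
    limsup (fun n => errP (X n) (φ n) (ψ n)) atTop ≤ ε ∧
    limsup (fun n => ovP (X n) (φ n) ((n : ℝ) * R + Real.sqrt (n : ℝ) * L)) atTop ≤ δ

/-- The second-order (ε,δ,R)-optimum threshold L(ε,δ,R|X). -/
noncomputable def Lopt (K : ℕ) (X : Source 𝒳) (ε δ R : ℝ) : ℝ :=
  sInf {L | SecondAch K X ε δ R L}

/-- A rate R ≥ 0 is optimistically (ε,δ)-achievable. -/
def OptFirstAch (K : ℕ) (X : Source 𝒳) (ε δ R : ℝ) : Prop :=
  0 ≤ R ∧ ∃ (φ : ∀ n, (Fin n → 𝒳) → Word K) (ψ : ∀ n, Word K → (Fin n → 𝒳)),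
    ∀ γ > (0 : ℝ), ∃ ns : ℕ → ℕ, StrictMono ns ∧ ∀ i,
      errP (X (ns i)) (φ (ns i)) (ψ (ns i)) ≤ ε + γ ∧
      ovP (X (ns i)) (φ (ns i)) ((ns i : ℝ) * R) ≤ δ + γ

/-- The optimistic first-order (ε,δ)-optimum threshold R*(ε,δ|X). -/
noncomputable def RoptStar (K : ℕ) (X : Source 𝒳) (ε δ : ℝ) : ℝ :=
  sInf {R | OptFirstAch K X ε δ R}

/-- L is optimistically (ε,δ,R)-achievable. -/
def OptSecondAch (K : ℕ) (X : Source 𝒳) (ε δ R L : ℝ) : Prop :=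
  ∃ (φ : ∀ n, (Fin n → 𝒳) → Word K) (ψ : ∀ n, Word K → (Fin n → 𝒳)),
    ∀ γ > (0 : ℝ), ∃ ns : ℕ → ℕ, StrictMono ns ∧ ∀ i,
      errP (X (ns i)) (φ (ns i)) (ψ (ns i)) ≤ ε + γ ∧
      ovP (X (ns i)) (φ (ns i)) ((ns i : ℝ) * R + Real.sqrt (ns i : ℝ) * L) ≤ δ + γ

/-- The optimistic second-order (ε,δ,R)-optimum threshold L*(ε,δ,R|X). -/
noncomputable def LoptStar (K : ℕ) (X : Source 𝒳) (ε δ R : ℝ) : ℝ :=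
  sInf {L | OptSecondAch K X ε δ R L}

/-- A rate R ≥ 0 is type I (ε,δ)-achievable. -/
def TypeIAch (K : ℕ) (X : Source 𝒳) (ε δ R : ℝ) : Prop :=
  0 ≤ R ∧ ∃ (φ : ∀ n, (Fin n → 𝒳) → Word K) (ψ : ∀ n, Word K → (Fin n → 𝒳)),
    limsup (fun n => errP (X n) (φ n) (ψ n)) atTop ≤ ε ∧
    liminf (fun n => ovP (X n) (φ n) ((n : ℝ) * R)) atTop ≤ δ

/-- R†(ε,δ|X). -/
noncomputable def Rdagger (K : ℕ) (X : Source 𝒳) (ε δ : ℝ) : ℝ :=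
  sInf {R | TypeIAch K X ε δ R}

/-- A rate R ≥ 0 is type II (ε,δ)-achievable. -/
def TypeIIAch (K : ℕ) (X : Source 𝒳) (ε δ R : ℝ) : Prop :=
  0 ≤ R ∧ ∃ (φ : ∀ n, (Fin n → 𝒳) → Word K) (ψ : ∀ n, Word K → (Fin n → 𝒳)),
    liminf (fun n => errP (X n) (φ n) (ψ n)) atTop ≤ ε ∧
    limsup (fun n => ovP (X n) (φ n) ((n : ℝ) * R)) atTop ≤ δ

/-- R‡(ε,δ|X). -/
noncomputable def Rddagger (K : ℕ) (X : Source 𝒳) (ε δ : ℝ) : ℝ :=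
  sInf {R | TypeIIAch K X ε δ R}

/-- H̄_γ(X) := inf{ R : limsup_n Pr{ (1/n) log(1/P_{X^n}(X^n)) > R } ≤ γ }. -/
noncomputable def Hbar (K : ℕ) (X : Source 𝒳) (γ : ℝ) : ℝ :=
  sInf {R | limsup (fun n =>
    (X n).pr {x | Real.logb (K : ℝ) (1 / (X n).p x) / (n : ℝ) > R}) atTop ≤ γ}

/-- H̄*_γ(X) (optimistic version, with liminf). -/
noncomputable def HbarStar (K : ℕ) (X : Source 𝒳) (γ : ℝ) : ℝ :=
  sInf {R | liminf (fun n =>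
    (X n).pr {x | Real.logb (K : ℝ) (1 / (X n).p x) / (n : ℝ) > R}) atTop ≤ γ}

/-- H̄_γ(R|X) := inf{ L : limsup_n Pr{ (1/n) log(1/P_{X^n}(X^n)) > R + L/√n } ≤ γ }. -/
noncomputable def Hbar2 (K : ℕ) (X : Source 𝒳) (γ R : ℝ) : ℝ :=
  sInf {L | limsup (fun n =>
    (X n).pr {x | Real.logb (K : ℝ) (1 / (X n).p x) / (n : ℝ)
      > R + L / Real.sqrt (n : ℝ)}) atTop ≤ γ}

/-- H̄*_γ(R|X) (optimistic version, with liminf). -/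
noncomputable def Hbar2Star (K : ℕ) (X : Source 𝒳) (γ R : ℝ) : ℝ :=
  sInf {L | liminf (fun n =>
    (X n).pr {x | Real.logb (K : ℝ) (1 / (X n).p x) / (n : ℝ)
      > R + L / Real.sqrt (n : ℝ)}) atTop ≤ γ}

/-- F(ε,R) := limsup_n inf_{A : Pr(A) ≥ 1−ε} Pr{ −(1/n) log P_{X^n}(X^n) ≥ R, X^n ∈ A }. -/
noncomputable def Fspec (K : ℕ) (X : Source 𝒳) (ε R : ℝ) : ℝ :=
  limsup (fun n =>
    sInf ((fun A : Set (Fin n → 𝒳) =>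
        (X n).pr (A ∩ {x | -Real.logb (K : ℝ) ((X n).p x) / (n : ℝ) ≥ R})) ''
      {A | (X n).pr A ≥ 1 - ε})) atTop

/-- H̃_{ε,δ}(X) := inf{ R : F(ε,R) ≤ δ }. -/
noncomputable def Htilde (K : ℕ) (X : Source 𝒳) (ε δ : ℝ) : ℝ :=
  sInf {R | Fspec K X ε R ≤ δ}

/-- G_{ε,δ}(X). -/
noncomputable def Gfirst (K : ℕ) (X : Source 𝒳) (ε δ : ℝ) : ℝ :=
  sInf {R | limNu (fun ν => limsup (fun n =>
    sInf ((fun A : Set (Fin n → 𝒳) =>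
        (X n).pr (A ∩ {x | -Real.logb (K : ℝ) ((X n).p x / (X n).pr A) / (n : ℝ) ≥ R})) ''
      {A | (X n).pr A ≥ 1 - ε - ν})) atTop) ≤ δ}

/-- G*_{ε,δ}(X) (optimistic version, with liminf). -/
noncomputable def GfirstStar (K : ℕ) (X : Source 𝒳) (ε δ : ℝ) : ℝ :=
  sInf {R | limNu (fun ν => liminf (fun n =>
    sInf ((fun A : Set (Fin n → 𝒳) =>
        (X n).pr (A ∩ {x | -Real.logb (K : ℝ) ((X n).p x / (X n).pr A) / (n : ℝ) ≥ R})) ''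
      {A | (X n).pr A ≥ 1 - ε - ν})) atTop) ≤ δ}

/-- G_{ε,δ}(R|X). -/
noncomputable def Gsecond (K : ℕ) (X : Source 𝒳) (ε δ R : ℝ) : ℝ :=
  sInf {L | limNu (fun ν => limsup (fun n =>
    sInf ((fun A : Set (Fin n → 𝒳) =>
        (X n).pr (A ∩ {x | -Real.logb (K : ℝ) ((X n).p x / (X n).pr A) / (n : ℝ)
          ≥ R + L / Real.sqrt (n : ℝ)})) ''
      {A | (X n).pr A ≥ 1 - ε - ν})) atTop) ≤ δ}

/-- G*_{ε,δ}(R|X) (optimistic version, with liminf). -/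
noncomputable def GsecondStar (K : ℕ) (X : Source 𝒳) (ε δ R : ℝ) : ℝ :=
  sInf {L | limNu (fun ν => liminf (fun n =>
    sInf ((fun A : Set (Fin n → 𝒳) =>
        (X n).pr (A ∩ {x | -Real.logb (K : ℝ) ((X n).p x / (X n).pr A) / (n : ℝ)
          ≥ R + L / Real.sqrt (n : ℝ)})) ''
      {A | (X n).pr A ≥ 1 - ε - ν})) atTop) ≤ δ}

/-- A rate R is optimistically ε-achievable by fixed-length codes. -/
def FixAchR (K : ℕ) (X : Source 𝒳) (ε R : ℝ) : Prop :=
  ∃ (M : ℕ → ℕ) (φ : ∀ n, (Fin n → 𝒳) → Fin (M n)) (ψ : ∀ n, Fin (M n) → (Fin n → 𝒳)),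
    ∀ γ > (0 : ℝ), ∃ ns : ℕ → ℕ, StrictMono ns ∧ ∀ i,
      (X (ns i)).pr {x | ψ (ns i) (φ (ns i) x) ≠ x} ≤ ε + γ ∧
      Real.logb (K : ℝ) (M (ns i) : ℝ) / (ns i : ℝ) ≤ R + γ

/-- R^f(ε|X). -/
noncomputable def Rfix (K : ℕ) (X : Source 𝒳) (ε : ℝ) : ℝ :=
  sInf {R | FixAchR K X ε R}

/-- A real L is optimistically (ε,R)-achievable by fixed-length codes. -/
def FixAchL (K : ℕ) (X : Source 𝒳) (ε R L : ℝ) : Prop :=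
  ∃ (M : ℕ → ℕ) (φ : ∀ n, (Fin n → 𝒳) → Fin (M n)) (ψ : ∀ n, Fin (M n) → (Fin n → 𝒳)),
    ∀ γ > (0 : ℝ), ∃ ns : ℕ → ℕ, StrictMono ns ∧ ∀ i,
      (X (ns i)).pr {x | ψ (ns i) (φ (ns i) x) ≠ x} ≤ ε + γ ∧
      Real.logb (K : ℝ) ((M (ns i) : ℝ) / (K : ℝ) ^ ((ns i : ℝ) * R)) / Real.sqrt (ns i : ℝ)
        ≤ L + γ

/-- L^f(ε,R|X). -/
noncomputable def Lfix (K : ℕ) (X : Source 𝒳) (ε R : ℝ) : ℝ :=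
  sInf {L | FixAchL K X ε R L}

open Topology

/-!
Converse. A code that is good along a subsequence decodes correctly on a set `D` with
`Pr D ≥ 1 - ε - γ`. The encoder is injective on `D`, so at most `K^{nR+1}` points of `D` have
codewords of length `≤ nR`; those in the tail `{P(x)/Pr D ≤ K^{-nR'}}` of `D` therefore carry
probability `≤ K^{1 - n(R'-R)}`, and the tail probability of `D` is at most `δ + γ + o(1)`.
Hence every `R' > R` lies in the set whose infimum is `G*`.

Achievability. If `R` lies in that set, then for every `ν > 0` infinitely many `n` admit a set `A`
with `Pr A ≥ 1 - ε - ν` and tail probability `< δ + ν`. Fewer than `K^{nR}` points of `A` lie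
outside the tail (`P(x) > Pr A · K^{-nR}`); they get distinct codewords of length `⌊nR⌋ + 1`,
the rest of `A` gets longer distinct codewords, so only the tail can overflow. Choosing the set
for `ν = 1/(k+1)` with `k` as large as possible yields one code sequence that is good for every `γ`.
-/

lemma csInf_le_csInf_of_forall_Ioi_subset {α : Type*} [ConditionallyCompleteLinearOrder α]
    [DenselyOrdered α] {S T : Set α} (hT : BddBelow T) (hS : S.Nonempty)
    (h : ∀ x ∈ S, Set.Ioi x ⊆ T) : sInf T ≤ sInf S :=
  le_csInf hS fun x hx => le_of_forall_gt_imp_ge_of_dense fun _ hy => csInf_le hT (h x hx hy)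

lemma csInf_eq_of_forall_Ioi_subset {α : Type*} [ConditionallyCompleteLinearOrder α]
    [DenselyOrdered α] [NoMaxOrder α] {S T : Set α} (hS : BddBelow S) (hT : BddBelow T)
    (hST : ∀ x ∈ S, Set.Ioi x ⊆ T) (hTS : ∀ x ∈ T, Set.Ioi x ⊆ S) : sInf S = sInf T := by
  rcases S.eq_empty_or_nonempty with rfl | hSne
  · obtain rfl : T = ∅ := T.eq_empty_of_forall_notMem fun x hx =>
      (exists_gt x).elim fun _ hy => hTS x hx hy
    rfl
  · obtain ⟨x, hx⟩ := hSne
    obtain ⟨y, hy⟩ := exists_gt x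
    exact le_antisymm (csInf_le_csInf_of_forall_Ioi_subset hS ⟨y, hST x hx hy⟩ hTS)
      (csInf_le_csInf_of_forall_Ioi_subset hT ⟨x, hx⟩ hST)

lemma exists_forall_frequently {C : ℕ → Type*} [∀ n, Nonempty (C n)]
    {Q : ℝ → (n : ℕ) → C n → Prop}
    (hQ : ∀ {ρ ρ' : ℝ} {n : ℕ} {c : C n}, ρ ≤ ρ' → Q ρ n c → Q ρ' n c)
    (h : ∀ ρ > 0, ∃ᶠ n in atTop, ∃ c, Q ρ n c) :
    ∃ c : (n : ℕ) → C n, ∀ ρ > 0, ∃ᶠ n in atTop, Q ρ n (c n) := by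
  classical
  let good (n k : ℕ) : Prop := ∃ c, Q (1 / ((k : ℝ) + 1)) n c
  let level (n : ℕ) : ℕ := Nat.findGreatest (good n) n
  refine ⟨fun n => Classical.epsilon (Q (1 / ((level n : ℝ) + 1)) n), fun ρ hρ => ?_⟩
  obtain ⟨k, hk⟩ := exists_nat_one_div_lt hρ
  refine ((h _ Nat.one_div_pos_of_nat).and_eventually (eventually_ge_atTop k)).mono
    fun n ⟨(hn : good n k), hkn⟩ => hQ ?_ (Classical.epsilon_spec (Nat.findGreatest_spec hkn hn))
  calc 1 / ((level n : ℝ) + 1) ≤ 1 / ((k : ℝ) + 1) := by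
        gcongr
        exact_mod_cast Nat.le_findGreatest hkn hn
    _ ≤ ρ := hk.le

lemma tendsto_rpow_one_sub_natCast_mul {b s : ℝ} (hb : 1 < b) (hs : 0 < s) :
    Tendsto (fun n : ℕ => b ^ (1 - n * s)) atTop (𝓝 0) := by
  have h := tendsto_natCast_atTop_atTop.atTop_mul_const hs
  exact (tendsto_rpow_atBot_of_base_gt_one b hb).comp <| by
    simpa [sub_eq_add_neg] using tendsto_atBot_add_const_left _ 1 (tendsto_neg_atTop_atBot.comp h)

lemma le_neg_logb_div_iff {b p a t R : ℝ} (hb : 1 < b) (hp : 0 < p) (ha : 0 < a) (ht : 0 < t) :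
    R ≤ -Real.logb b (p / a) / t ↔ p ≤ a * b ^ (-(t * R)) := by
  rw [le_div_iff₀ ht, le_neg, Real.logb_le_iff_le_rpow hb (div_pos hp ha), div_le_iff₀ ha,
    mul_comm a, mul_comm t]

namespace Dist

variable {α : Type*} (P : Dist α)

lemma pr_eq_tsum_indicator (A : Set α) : P.pr A = ∑' x, A.indicator P.p x := tsum_subtype A P.p

lemma summable_indicator (A : Set α) : Summable (A.indicator P.p) :=
  P.hasSum.summable.indicator A

lemma pr_nonneg (A : Set α) : 0 ≤ P.pr A := tsum_nonneg fun x => P.nonneg x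

lemma pr_le_pr_of_forall_ne_zero {A B : Set α} (h : ∀ x ∈ A, P.p x ≠ 0 → x ∈ B) :
    P.pr A ≤ P.pr B := by
  rw [pr_eq_tsum_indicator, pr_eq_tsum_indicator]
  refine (P.summable_indicator A).tsum_le_tsum (fun x => ?_) (P.summable_indicator B)
  have hB : 0 ≤ B.indicator P.p x := Set.indicator_nonneg (fun y _ => P.nonneg y) x
  by_cases hxA : x ∈ A
  · by_cases hx : P.p x = 0
    · rwa [Set.indicator_of_mem hxA, hx]
    · rw [Set.indicator_of_mem hxA, Set.indicator_of_mem (h x hxA hx)]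
  · rwa [Set.indicator_of_notMem hxA]

lemma pr_mono {A B : Set α} (h : A ⊆ B) : P.pr A ≤ P.pr B :=
  P.pr_le_pr_of_forall_ne_zero fun _ hx _ => h hx

lemma pr_univ : P.pr Set.univ = 1 := (tsum_univ P.p).trans P.hasSum.tsum_eq

lemma pr_le_one (A : Set α) : P.pr A ≤ 1 := P.pr_univ ▸ P.pr_mono (Set.subset_univ A)

lemma univ_mem_setOf_pr_ge {c : ℝ} (hc : c ≤ 1) : Set.univ ∈ {A | P.pr A ≥ c} := by
  simpa [P.pr_univ] using hc

lemma pr_compl (A : Set α) : P.pr Aᶜ = 1 - P.pr A := by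
  rw [← P.hasSum.tsum_eq, ← Summable.tsum_add_tsum_compl (s := A)
    (P.hasSum.summable.subtype _) (P.hasSum.summable.subtype _), pr, pr]
  ring

lemma pr_union_le (A B : Set α) : P.pr (A ∪ B) ≤ P.pr A + P.pr B := by
  simp only [pr_eq_tsum_indicator]
  rw [← (P.summable_indicator A).tsum_add (P.summable_indicator B)]
  refine (P.summable_indicator _).tsum_le_tsum (fun x => ?_)
    ((P.summable_indicator A).add (P.summable_indicator B))
  by_cases hA : x ∈ A <;> by_cases hB : x ∈ B <;> simp [hA, hB, P.nonneg x]

lemma p_le_pr {A : Set α} {x : α} (hx : x ∈ A) : P.p x ≤ P.pr A :=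
  (P.hasSum.summable.subtype A).le_tsum (⟨x, hx⟩ : A) fun y _ => P.nonneg y.1

lemma pr_le_card_mul {S : Set α} (hS : S.Finite) {β : ℝ} (hp : ∀ x ∈ S, P.p x ≤ β) :
    P.pr S ≤ Nat.card S * β := by
  have := hS.fintype
  rw [pr, tsum_fintype, Nat.card_eq_fintype_card, ← Finset.card_univ, ← nsmul_eq_mul]
  exact Finset.sum_le_card_nsmul _ _ _ fun x _ => hp x x.2

lemma card_mul_le_pr {S : Set α} (hS : S.Finite) {β : ℝ} (hp : ∀ x ∈ S, β ≤ P.p x) :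
    Nat.card S * β ≤ P.pr S := by
  have := hS.fintype
  rw [pr, tsum_fintype, Nat.card_eq_fintype_card, ← Finset.card_univ, ← nsmul_eq_mul]
  exact Finset.card_nsmul_le_sum _ _ _ fun x _ => hp x x.2

lemma finite_setOf_lt {β : ℝ} (hβ : 0 < β) : {x | β < P.p x}.Finite := by
  simpa [not_le] using
    eventually_cofinite.1 (P.hasSum.summable.tendsto_cofinite_zero.eventually_le_const hβ)

protected lemma nonempty {α : Type*} (P : Dist α) : Nonempty α := by
  by_contra h
  have := not_nonempty_iff.1 h
  simpa using P.hasSum.unique hasSum_empty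

end Dist

section Codes

variable {α : Type*} {K : ℕ}

/-- The appended most significant digit `1` keeps trailing zeros of `w` significant. -/
def wordIndex (K : ℕ) (w : List (Fin K)) : ℕ := Nat.ofDigits K (w.map Fin.val ++ [1])

lemma lt_of_mem_map_val_append_one (hK : 2 ≤ K) {w : List (Fin K)} {d : ℕ}
    (hd : d ∈ w.map Fin.val ++ [1]) : d < K := by
  rcases List.mem_append.1 hd with hd | hd
  · obtain ⟨a, _, rfl⟩ := List.mem_map.1 hd
    exact a.2
  · rw [List.mem_singleton.1 hd]; omega

lemma wordIndex_injective (hK : 2 ≤ K) : Function.Injective (wordIndex K) := by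
  have hdigits (w : List (Fin K)) : Nat.digits K (wordIndex K w) = w.map Fin.val ++ [1] :=
    Nat.digits_ofDigits K hK _ (fun _ hd => lt_of_mem_map_val_append_one hK hd)
      (fun _ => by simp)
  intro w₁ w₂ h
  have := (hdigits w₁).symm.trans ((congrArg (Nat.digits K) h).trans (hdigits w₂))
  exact List.map_injective_iff.2 Fin.val_injective (List.append_cancel_right this)

lemma wordIndex_lt (hK : 2 ≤ K) (w : List (Fin K)) : wordIndex K w < K ^ (w.length + 1) := by
  simpa [wordIndex] using Nat.ofDigits_lt_base_pow_length (l := w.map Fin.val ++ [1]) hK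
    fun _ hd => lt_of_mem_map_val_append_one hK hd

lemma Dist.pr_le_of_injOn_wlen_le (hK : 2 ≤ K) (P : Dist α) {φ : α → Word K} {S : Set α}
    (hφ : S.InjOn φ) {η β : ℝ} (hη : 0 ≤ η) (hlen : ∀ x ∈ S, wlen (φ x) ≤ η) (hβ : 0 ≤ β)
    (hp : ∀ x ∈ S, P.p x ≤ β) : P.pr S ≤ (K : ℝ) ^ (η + 1) * β := by
  set m := ⌊η⌋₊
  have hidx (x : S) : wordIndex K (φ x).1 < K ^ (m + 1) :=
    (wordIndex_lt hK _).trans_le <| Nat.pow_le_pow_right (by omega) <|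
      Nat.succ_le_succ (Nat.le_floor (hlen x x.2))
  let e : S → Fin (K ^ (m + 1)) := fun x => ⟨wordIndex K (φ x).1, hidx x⟩
  have he : Function.Injective e := fun x y hxy =>
    Subtype.ext <| hφ x.2 y.2 <| Subtype.ext <| wordIndex_injective hK (Fin.mk.inj_iff.1 hxy)
  have := Finite.of_injective e he
  calc P.pr S ≤ Nat.card S * β := P.pr_le_card_mul S.toFinite hp
    _ ≤ ((K ^ (m + 1) : ℕ) : ℝ) * β := by
        gcongr
        simpa using Nat.card_le_card_of_injective e he
    _ ≤ (K : ℝ) ^ (η + 1) * β := by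
        gcongr
        rw [Nat.cast_pow, ← Real.rpow_natCast]
        exact Real.rpow_le_rpow_of_exponent_le (by exact_mod_cast (by omega : 1 ≤ K))
          (by push_cast; linarith [Nat.floor_le hη])

lemma exists_decoder_errP_le (P : Dist α) {φ : α → Word K} {A : Set α} (hφ : A.InjOn φ) :
    ∃ ψ : Word K → α, errP P φ ψ ≤ 1 - P.pr A := by
  have := P.nonempty
  refine ⟨Function.invFunOn φ A, ?_⟩
  rw [errP, ← P.pr_compl]
  exact P.pr_mono fun x hx hxA => hx (hφ.leftInvOn_invFunOn hxA)

lemma exists_injOn_wlen_le [Countable α] (hK : 2 ≤ K) {A B : Set α} (hB : B.Finite) {m : ℕ}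
    (hm : 1 ≤ m) (hcard : Nat.card B ≤ K ^ m) :
    ∃ φ : α → Word K, A.InjOn φ ∧ ∀ x, x ∉ A \ B → wlen (φ x) ≤ m := by
  classical
  have := hB.fintype
  obtain ⟨f⟩ : Nonempty (B ↪ (Fin m → Fin K)) :=
    Function.Embedding.nonempty_of_card_le <| by
      rwa [Fintype.card_fun, Fintype.card_fin, Fintype.card_fin, ← Nat.card_eq_fintype_card]
  obtain ⟨g, hg⟩ := exists_injective_nat α
  let z : Fin K := ⟨0, by omega⟩
  let φ : α → Word K := fun x =>
    if hx : x ∈ B then ⟨List.ofFn (f ⟨x, hx⟩), by simp; omega⟩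
    else if x ∈ A then ⟨List.replicate (m + 1 + g x) z, by simp⟩
    else ⟨[z], by simp⟩
  refine ⟨φ, fun x hx y hy hxy => ?_, fun x hx => ?_⟩
  · have hlen := congrArg (fun w : Word K => w.1.length) hxy
    by_cases hxB : x ∈ B <;> by_cases hyB : y ∈ B
    · simp only [φ, hxB, hyB, dite_true, Subtype.mk.injEq] at hxy
      exact congrArg Subtype.val (f.injective (List.ofFn_injective hxy))
    · simp [φ, hxB, hyB, hy] at hlen; omega
    · simp [φ, hxB, hyB, hx] at hlen; omega
    · simp only [φ, hxB, hyB, hx, hy, dite_false, if_true, List.length_replicate] at hlen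
      exact hg (by omega)
  · by_cases hxB : x ∈ B
    · simp [φ, wlen, hxB]
    · have hxA : x ∉ A := fun hxA => hx ⟨hxA, hxB⟩
      simp [φ, wlen, hxB, hxA]
      exact_mod_cast hm

lemma ovP_antitone (P : Dist α) (φ : α → Word K) : Antitone (ovP P φ) :=
  fun _ _ h => P.pr_mono fun _ hx => lt_of_le_of_lt h hx

end Codes

section Tail

variable {α : Type*}

noncomputable def tailMass (b : ℝ) (P : Dist α) (t R : ℝ) (A : Set α) : ℝ :=
  P.pr (A ∩ {x | -Real.logb b (P.p x / P.pr A) / t ≥ R})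

noncomputable def minTailMass (b : ℝ) (P : Dist α) (t R c : ℝ) : ℝ :=
  sInf (tailMass b P t R '' {A | P.pr A ≥ c})

variable {b : ℝ} (P : Dist α) {t R c : ℝ}

lemma minTailMass_nonneg : 0 ≤ minTailMass b P t R c :=
  Real.sInf_nonneg <| Set.forall_mem_image.2 fun _ _ => P.pr_nonneg _

lemma minTailMass_le_tailMass {A : Set α} (hA : c ≤ P.pr A) :
    minTailMass b P t R c ≤ tailMass b P t R A :=
  csInf_le ⟨0, Set.forall_mem_image.2 fun _ _ => P.pr_nonneg _⟩ ⟨A, hA, rfl⟩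

lemma minTailMass_le_one (hc : c ≤ 1) : minTailMass b P t R c ≤ 1 :=
  (minTailMass_le_tailMass P (P.univ_mem_setOf_pr_ge hc)).trans (P.pr_le_one _)

lemma exists_tailMass_lt (hc : c ≤ 1) {a : ℝ} (h : minTailMass b P t R c < a) :
    ∃ A, c ≤ P.pr A ∧ tailMass b P t R A < a := by
  obtain ⟨_, ⟨A, hA, rfl⟩, hlt⟩ :=
    exists_lt_of_csInf_lt ⟨_, Set.mem_image_of_mem _ (P.univ_mem_setOf_pr_ge hc)⟩ h
  exact ⟨A, hA, hlt⟩

lemma le_minTailMass_of_nonpos (hb : 1 < b) (ht : 0 ≤ t) (hR : R ≤ 0) (hc : c ≤ 1) :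
    c ≤ minTailMass b P t R c := by
  refine le_csInf ⟨_, Set.mem_image_of_mem _ (P.univ_mem_setOf_pr_ge hc)⟩ ?_
  rintro _ ⟨A, hA, rfl⟩
  refine hA.trans (P.pr_le_pr_of_forall_ne_zero fun x hx _ => ⟨hx, ?_⟩)
  have : Real.logb b (P.p x / P.pr A) ≤ 0 :=
    Real.logb_nonpos hb (div_nonneg (P.nonneg x) (P.pr_nonneg A))
      (div_le_one_of_le₀ (P.p_le_pr hx) (P.pr_nonneg A))
  exact hR.trans (div_nonneg (by linarith) ht)

end Tail

section SingleBlocklength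

variable {α : Type*} {K : ℕ}

lemma minTailMass_le_ovP_add (hK : 2 ≤ K) (P : Dist α) (φ : α → Word K) (ψ : Word K → α)
    {t R R' c : ℝ} (ht : 0 < t) (hR : 0 ≤ R) (herr : errP P φ ψ < 1)
    (hc : c ≤ 1 - errP P φ ψ) :
    minTailMass K P t R' c ≤ ovP P φ (t * R) + (K : ℝ) ^ (1 - t * (R' - R)) := by
  have hK1 : (1 : ℝ) < K := by exact_mod_cast hK
  set D := {x | ψ (φ x) = x}
  have hD : P.pr D = 1 - errP P φ ψ := by
    rw [errP, show {x | ψ (φ x) ≠ x} = Dᶜ from rfl, P.pr_compl, sub_sub_cancel]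
  have hDinj : D.InjOn φ := fun x hx y hy h => hx.symm.trans ((congrArg ψ h).trans hy)
  set E := {x | -Real.logb K (P.p x / P.pr D) / t ≥ R'}
  set S := D ∩ E ∩ {x | wlen (φ x) ≤ t * R}
  have hpS : ∀ x ∈ S, P.p x ≤ (K : ℝ) ^ (-(t * R')) := by
    intro x hx
    rcases (P.nonneg x).eq_or_lt with hx0 | hx0
    · rw [← hx0]; positivity
    calc P.p x ≤ P.pr D * (K : ℝ) ^ (-(t * R')) :=
          (le_neg_logb_div_iff hK1 hx0 (by linarith) ht).1 hx.1.2
      _ ≤ (K : ℝ) ^ (-(t * R')) := mul_le_of_le_one_left (by positivity) (P.pr_le_one D)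
  have hS : P.pr S ≤ (K : ℝ) ^ (1 - t * (R' - R)) := by
    calc P.pr S ≤ (K : ℝ) ^ (t * R + 1) * (K : ℝ) ^ (-(t * R')) :=
          P.pr_le_of_injOn_wlen_le hK (hDinj.mono fun x hx => hx.1.1) (by positivity)
            (fun x hx => hx.2) (by positivity) hpS
      _ = (K : ℝ) ^ (1 - t * (R' - R)) := by
          rw [← Real.rpow_add (by positivity)]
          ring_nf
  calc minTailMass K P t R' c ≤ tailMass K P t R' D := minTailMass_le_tailMass P (hD ▸ hc)
    _ ≤ P.pr ({x | wlen (φ x) > t * R} ∪ S) := P.pr_mono fun x hx => by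
        by_cases hlen : wlen (φ x) ≤ t * R
        · exact Or.inr ⟨hx, hlen⟩
        · exact Or.inl (not_le.1 hlen)
    _ ≤ ovP P φ (t * R) + P.pr S := P.pr_union_le _ _
    _ ≤ ovP P φ (t * R) + (K : ℝ) ^ (1 - t * (R' - R)) := by linarith

lemma exists_code_ovP_le_tailMass [Countable α] (hK : 2 ≤ K) (P : Dist α) {t R : ℝ}
    (ht : 0 < t) (hR : 0 ≤ R) {A : Set α} (hA : 0 < P.pr A) :
    ∃ (φ : α → Word K) (ψ : Word K → α),
      errP P φ ψ ≤ 1 - P.pr A ∧ ovP P φ (t * R + 1) ≤ tailMass K P t R A := by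
  have hK1 : (1 : ℝ) < K := by exact_mod_cast hK
  set a := P.pr A * (K : ℝ) ^ (-(t * R))
  have ha : 0 < a := by positivity
  set B := A ∩ {x | a < P.p x}
  have hB : B.Finite := (P.finite_setOf_lt ha).subset Set.inter_subset_right
  have hcard : Nat.card B ≤ K ^ (⌊t * R⌋₊ + 1) := by
    have h₁ : Nat.card B * a ≤ P.pr A :=
      (P.card_mul_le_pr hB fun x hx => hx.2.le).trans (P.pr_mono Set.inter_subset_left)
    have h₂ : (Nat.card B : ℝ) ≤ (K : ℝ) ^ (t * R) := by
      have hpow : (K : ℝ) ^ (t * R) * (K : ℝ) ^ (-(t * R)) = 1 := by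
        rw [← Real.rpow_add (by positivity), add_neg_cancel, Real.rpow_zero]
      nlinarith [Real.rpow_pos_of_pos (by positivity : (0 : ℝ) < K) (-(t * R))]
    have h₃ : (K : ℝ) ^ (t * R) ≤ ((K ^ (⌊t * R⌋₊ + 1) : ℕ) : ℝ) := by
      rw [Nat.cast_pow, ← Real.rpow_natCast]
      exact Real.rpow_le_rpow_of_exponent_le hK1.le
        (by push_cast; linarith [Nat.lt_floor_add_one (t * R)])
    exact_mod_cast h₂.trans h₃
  obtain ⟨φ, hinj, hlen⟩ := exists_injOn_wlen_le (A := A) hK hB (Nat.le_add_left 1 _) hcard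
  obtain ⟨ψ, hψ⟩ := exists_decoder_errP_le P hinj
  refine ⟨φ, ψ, hψ, P.pr_le_pr_of_forall_ne_zero fun x hx hpx => ?_⟩
  have hxAB : x ∈ A \ B := by
    by_contra hxAB
    have := hlen x hxAB
    push_cast at this
    linarith [Nat.floor_le (by positivity : 0 ≤ t * R), hx.out]
  refine ⟨hxAB.1, (le_neg_logb_div_iff hK1 ((P.nonneg x).lt_of_ne' hpx) hA ht).2 ?_⟩
  exact not_lt.1 fun h => hxAB.2 ⟨hxAB.1, h⟩

end SingleBlocklength

lemma limNu_le {g : ℝ → ℝ} {δ : ℝ} (h : ∀ ν > 0, g ν ≤ δ) : limNu g ≤ δ :=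
  csSup_le (Set.nonempty_Ioi.image g) (Set.forall_mem_image.2 h)

lemma le_limNu {g : ℝ → ℝ} {C ν : ℝ} (hC : ∀ ν > 0, g ν ≤ C) (hν : 0 < ν) : g ν ≤ limNu g :=
  le_csSup ⟨C, Set.forall_mem_image.2 hC⟩ (Set.mem_image_of_mem g hν)

section Source

variable {𝒳 : Type*} {K : ℕ} {X : Source 𝒳} {ε δ R R' : ℝ}

lemma optFirstAch_iff_frequently :
    OptFirstAch K X ε δ R ↔ 0 ≤ R ∧ ∃ (φ : ∀ n, (Fin n → 𝒳) → Word K)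
      (ψ : ∀ n, Word K → (Fin n → 𝒳)), ∀ γ > (0 : ℝ), ∃ᶠ n in atTop,
        errP (X n) (φ n) (ψ n) ≤ ε + γ ∧ ovP (X n) (φ n) ((n : ℝ) * R) ≤ δ + γ :=
  and_congr_right fun _ => exists_congr fun _ => exists_congr fun _ => forall₂_congr fun _ _ =>
    ⟨fun ⟨_, hns, h⟩ => hns.tendsto_atTop.frequently (Frequently.of_forall h),
      extraction_of_frequently_atTop⟩

def GfirstStarSet (K : ℕ) (X : Source 𝒳) (ε δ : ℝ) : Set ℝ :=
  {R | limNu (fun ν => liminf (fun n => minTailMass K (X n) n R (1 - ε - ν)) atTop) ≤ δ}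

lemma mem_GfirstStarSet_iff (hε : 0 ≤ ε) : R ∈ GfirstStarSet K X ε δ ↔
    ∀ ν > 0, liminf (fun n => minTailMass K (X n) n R (1 - ε - ν)) atTop ≤ δ := by
  refine ⟨fun h ν hν => (le_limNu (C := 1) (fun ν hν => ?_) hν).trans h, limNu_le⟩
  exact liminf_le_of_frequently_le
    (Frequently.of_forall fun n => minTailMass_le_one _ (by linarith))
    (isBoundedUnder_of_eventually_ge (Eventually.of_forall fun n => minTailMass_nonneg _))

lemma pos_of_mem_GfirstStarSet (hK : 2 ≤ K) (hε : 0 ≤ ε) (hεδ : ε + δ < 1)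
    (hR : R ∈ GfirstStarSet K X ε δ) : 0 < R := by
  by_contra! hR0
  obtain ⟨ν, hν, hνδ⟩ : ∃ ν : ℝ, 0 < ν ∧ δ < 1 - ε - ν :=
    ⟨(1 - ε - δ) / 2, by linarith, by linarith⟩
  have hc : 1 - ε - ν ≤ 1 := by linarith
  have hlow : 1 - ε - ν ≤ liminf (fun n => minTailMass K (X n) n R (1 - ε - ν)) atTop :=
    le_liminf_of_le
      (isBoundedUnder_of_eventually_le
        (Eventually.of_forall fun n => minTailMass_le_one _ hc)).isCoboundedUnder_ge
      (Eventually.of_forall fun n =>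
        le_minTailMass_of_nonpos _ (by exact_mod_cast hK) n.cast_nonneg hR0 hc)
  linarith [(mem_GfirstStarSet_iff hε).1 hR ν hν]

lemma liminf_minTailMass_le_of_optFirstAch (hK : 2 ≤ K) (hε : ε < 1)
    (hR : OptFirstAch K X ε δ R) (hRR' : R < R') {ν : ℝ} (hν : 0 < ν) :
    liminf (fun n => minTailMass K (X n) n R' (1 - ε - ν)) atTop ≤ δ := by
  obtain ⟨hR0, φ, ψ, hcode⟩ := optFirstAch_iff_frequently.1 hR
  refine le_of_forall_pos_le_add fun τ hτ => ?_
  set γ := min (min ν (τ / 2)) ((1 - ε) / 2)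
  have hγ : 0 < γ := lt_min (lt_min hν (by linarith)) (by linarith)
  have hγν : γ ≤ ν := (min_le_left _ _).trans (min_le_left _ _)
  have hγτ : γ ≤ τ / 2 := (min_le_left _ _).trans (min_le_right _ _)
  have hγε : γ ≤ (1 - ε) / 2 := min_le_right _ _
  have hdecay : ∀ᶠ n : ℕ in atTop, (K : ℝ) ^ (1 - n * (R' - R)) < τ / 2 :=
    (tendsto_rpow_one_sub_natCast_mul (by exact_mod_cast hK) (sub_pos.2 hRR')).eventually_lt_const
      (by linarith)
  refine liminf_le_of_frequently_le (((hcode γ hγ).and_eventually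
      (hdecay.and (eventually_gt_atTop 0))).mono fun n ⟨⟨herr, hov⟩, hsmall, hn⟩ => ?_)
    (isBoundedUnder_of_eventually_ge (Eventually.of_forall fun n => minTailMass_nonneg _))
  calc minTailMass K (X n) n R' (1 - ε - ν)
      ≤ ovP (X n) (φ n) (n * R) + (K : ℝ) ^ (1 - n * (R' - R)) :=
        minTailMass_le_ovP_add hK (X n) (φ n) (ψ n) (by exact_mod_cast hn) hR0 (by linarith)
          (by linarith)
    _ ≤ δ + τ := by linarith

lemma frequently_code_of_mem_GfirstStarSet [Countable 𝒳] (hK : 2 ≤ K) (hε0 : 0 ≤ ε) (hε1 : ε < 1)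
    (hR : R ∈ GfirstStarSet K X ε δ) (hR0 : 0 ≤ R) (hRR' : R < R') {ρ : ℝ} (hρ : 0 < ρ) :
    ∃ᶠ n in atTop, ∃ c : ((Fin n → 𝒳) → Word K) × (Word K → Fin n → 𝒳),
      errP (X n) c.1 c.2 ≤ ε + ρ ∧ ovP (X n) c.1 (n * R') ≤ δ + ρ := by
  set ν := min ρ ((1 - ε) / 2)
  have hν : 0 < ν := lt_min hρ (by linarith)
  have hνρ : ν ≤ ρ := min_le_left _ _
  have hνε : ν ≤ (1 - ε) / 2 := min_le_right _ _
  have hc : 1 - ε - ν ≤ 1 := by linarith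
  have hfreq : ∃ᶠ n in atTop, minTailMass K (X n) n R (1 - ε - ν) < δ + ν :=
    frequently_lt_of_liminf_lt
      (isBoundedUnder_of_eventually_le
        (Eventually.of_forall fun n => minTailMass_le_one _ hc)).isCoboundedUnder_ge
      (by linarith [(mem_GfirstStarSet_iff hε0).1 hR ν hν])
  have hlong : ∀ᶠ n : ℕ in atTop, 1 ≤ n * (R' - R) :=
    (tendsto_natCast_atTop_atTop.atTop_mul_const (sub_pos.2 hRR')).eventually_ge_atTop 1
  refine (hfreq.and_eventually (hlong.and (eventually_gt_atTop 0))).mono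
    fun n ⟨hn, hlong, hn0⟩ => ?_
  obtain ⟨A, hA, hAtail⟩ := exists_tailMass_lt _ hc hn
  obtain ⟨φ, ψ, herr, hov⟩ :=
    exists_code_ovP_le_tailMass hK (X n) (Nat.cast_pos.2 hn0) hR0 (by linarith)
  refine ⟨(φ, ψ), by linarith, ?_⟩
  calc ovP (X n) φ (n * R') ≤ ovP (X n) φ (n * R + 1) := ovP_antitone _ _ (by linarith)
    _ ≤ δ + ρ := by linarith

lemma optFirstAch_of_mem_GfirstStarSet [Countable 𝒳] (hK : 2 ≤ K) (hε0 : 0 ≤ ε) (hε1 : ε < 1)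
    (hR : R ∈ GfirstStarSet K X ε δ) (hR0 : 0 ≤ R) (hRR' : R < R') : OptFirstAch K X ε δ R' := by
  have (n : ℕ) : Nonempty (((Fin n → 𝒳) → Word K) × (Word K → Fin n → 𝒳)) :=
    have := (X n).nonempty
    ⟨(fun _ => ⟨[⟨0, by omega⟩], by simp⟩, fun _ => Classical.arbitrary _)⟩
  obtain ⟨c, hc⟩ := exists_forall_frequently
    (C := fun n => ((Fin n → 𝒳) → Word K) × (Word K → Fin n → 𝒳))
    (Q := fun ρ n c => errP (X n) c.1 c.2 ≤ ε + ρ ∧ ovP (X n) c.1 (n * R') ≤ δ + ρ)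
    (fun hρ h => ⟨h.1.trans (by linarith), h.2.trans (by linarith)⟩)
    (fun ρ hρ => frequently_code_of_mem_GfirstStarSet hK hε0 hε1 hR hR0 hRR' hρ)
  exact optFirstAch_iff_frequently.2 ⟨hR0.trans hRR'.le, fun n => (c n).1, fun n => (c n).2, hc⟩

end Source

theorem statement14_general {𝒳 : Type*} [Countable 𝒳] (K : ℕ) (hK : 2 ≤ K) (X : Source 𝒳)
    (ε δ : ℝ) (hε0 : 0 ≤ ε) (hε1 : ε < 1) (hεδ : ε + δ < 1) :
    RoptStar K X ε δ = GfirstStar K X ε δ :=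
  csInf_eq_of_forall_Ioi_subset ⟨0, fun _ hR => hR.1⟩
    ⟨0, fun _ hR => (pos_of_mem_GfirstStarSet hK hε0 hεδ hR).le⟩
    (fun _ hR _ hR' => (mem_GfirstStarSet_iff hε0).2 fun _ hν =>
      liminf_minTailMass_le_of_optFirstAch hK hε1 hR hR' hν)
    (fun _ hR _ hR' => optFirstAch_of_mem_GfirstStarSet hK hε0 hε1 hR
      (pos_of_mem_GfirstStarSet hK hε0 hεδ hR).le hR')

/-- optimistic first-order general formula R*(ε,δ|X) = G*_{ε,δ}(X). -/
theorem statement14 {𝒳 : Type*} [Countable 𝒳] (K : ℕ) (hK : 2 ≤ K) (X : Source 𝒳)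
    (ε δ : ℝ) (hε0 : 0 ≤ ε) (hε1 : ε < 1) (hδ0 : 0 ≤ δ) (hδ1 : δ < 1) (hεδ : ε + δ < 1) :
    RoptStar K X ε δ = GfirstStar K X ε δ :=
  statement14_general K hK X ε δ hε0 hε1 hεδ
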